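/- Let N ≥ 1 be an integer, P_max > 0, T > 0, R > 0, and define P_ε(Q) = 1 - [1 - γ(N, Q/P_max)/Γ(N)]·[1 - f(A(Q))], where f is the Gaussian Q-function and A(Q) = √T·(ln(1+Q) - R·ln 2)/√(1 - 1/(1+Q)²). Then P_ε is convex on the interval (max(Q₀, 2^R - 1), P_max·(N-1)), where Q₀ is the unique positive solution of ln(1+Q)/((1+Q)²-1) = 1/3. -/

import Mathlib

/-!
`P_ε = 1 - F · G` with `F(Q) = 1 - γ(N, Q/P_max)/Γ(N)` and `G(Q) = 1 - f(A(Q))`, so it suffices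
that `F · G` is concave. Both factors are concave and nonnegative, and `F` decreases while `G`
increases; for such a pair the product is concave. `F` is concave because `γ(N, ·)` has the
increasing derivative `x^(N-1) e^(-x)` on `[0, N-1]`. `G` is the concave increasing function
`1 - f` on `[0, ∞)` composed with `A`, which is nonnegative for `Q ≥ 2^R - 1` and concave
increasing as soon as `3 ln(1+Q) ≤ (1+Q)² - 1`; since `ln u / (u² - 1)` decreases, this holds
for `Q ≥ Q₀`.
-/

/-- The Gaussian Q-function. -/
noncomputable def gaussQ (x : ℝ) : ℝ :=
  ∫ t in Set.Ioi x, Real.exp (-t ^ 2 / 2) / Real.sqrt (2 * Real.pi)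

/-- The lower incomplete gamma function γ(s, x) = ∫₀^x t^{s-1} e^{-t} dt. -/
noncomputable def lowerGamma (s x : ℝ) : ℝ :=
  ∫ t in Set.Ioo 0 x, t ^ (s - 1) * Real.exp (-t)

open Real MeasureTheory Set ProbabilityTheory

lemma ConcaveOn.comp_of_mapsTo {E : Type*} [AddCommMonoid E] [Module ℝ E] {s : Set E}
    {t : Set ℝ} {f : E → ℝ} {g : ℝ → ℝ} (hg : ConcaveOn ℝ t g) (hg' : MonotoneOn g t)
    (hf : ConcaveOn ℝ s f) (hst : MapsTo f s t) : ConcaveOn ℝ s (g ∘ f) :=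
  ⟨hf.1, fun _ hx _ hy _ _ ha hb hab =>
    (hg.2 (hst hx) (hst hy) ha hb hab).trans <|
      hg' (hg.1 (hst hx) (hst hy) ha hb hab) (hst (hf.1 hx hy ha hb hab)) (hf.2 hx hy ha hb hab)⟩

section GaussQ

lemma gaussianPDFReal_zero_one (t : ℝ) :
    gaussianPDFReal 0 1 t = exp (-t ^ 2 / 2) / √(2 * π) := by
  simp [gaussianPDFReal, div_eq_inv_mul]

lemma one_sub_gaussQ (x : ℝ) : 1 - gaussQ x = ∫ t in Iic x, gaussianPDFReal 0 1 t := by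
  have h := intervalIntegral.integral_Iic_add_Ioi (b := x)
    (integrable_gaussianPDFReal 0 1).integrableOn (integrable_gaussianPDFReal 0 1).integrableOn
  rw [integral_gaussianPDFReal_eq_one 0 one_ne_zero] at h
  simp only [gaussQ, ← gaussianPDFReal_zero_one]
  linarith

lemma one_sub_gaussQ_nonneg (x : ℝ) : 0 ≤ 1 - gaussQ x := by
  rw [one_sub_gaussQ]
  exact setIntegral_nonneg measurableSet_Iic fun t _ => gaussianPDFReal_nonneg 0 1 t

lemma hasDerivAt_one_sub_gaussQ (x : ℝ) :
    HasDerivAt (fun y => 1 - gaussQ y) (gaussianPDFReal 0 1 x) x := by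
  have hcont : Continuous (gaussianPDFReal 0 1) := by
    simp only [funext gaussianPDFReal_zero_one]; fun_prop
  have hint (y : ℝ) := (integrable_gaussianPDFReal 0 1).integrableOn (s := Iic y)
  have h : (fun y => 1 - gaussQ y) =
      fun y => (1 - gaussQ 0) + ∫ t in (0 : ℝ)..y, gaussianPDFReal 0 1 t := by
    ext y
    rw [one_sub_gaussQ, one_sub_gaussQ, ← intervalIntegral.integral_Iic_sub_Iic (hint 0) (hint y)]
    ring
  rw [h]
  exact (intervalIntegral.integral_hasDerivAt_right (hcont.intervalIntegrable _ _)
    (hcont.stronglyMeasurableAtFilter _ _) hcont.continuousAt).const_add _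

lemma hasDerivAt_gaussianPDFReal_zero_one (x : ℝ) :
    HasDerivAt (gaussianPDFReal 0 1) (-x * gaussianPDFReal 0 1 x) x := by
  simp only [funext gaussianPDFReal_zero_one]
  have h : HasDerivAt (fun t : ℝ => -t ^ 2 / 2) (-x) x :=
    (((hasDerivAt_pow 2 x).fun_neg).div_const 2).congr_deriv (by push_cast; ring)
  exact (h.exp.div_const _).congr_deriv (by ring)

lemma monotone_one_sub_gaussQ : Monotone (fun y => 1 - gaussQ y) :=
  monotone_of_hasDerivAt_nonneg hasDerivAt_one_sub_gaussQ (gaussianPDFReal_nonneg 0 1)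

lemma concaveOn_one_sub_gaussQ : ConcaveOn ℝ (Ici 0) (fun y => 1 - gaussQ y) := by
  refine concaveOn_of_hasDerivWithinAt2_nonpos (convex_Ici 0)
    (fun x _ => (hasDerivAt_one_sub_gaussQ x).continuousAt.continuousWithinAt)
    (fun x _ => (hasDerivAt_one_sub_gaussQ x).hasDerivWithinAt)
    (fun x _ => (hasDerivAt_gaussianPDFReal_zero_one x).hasDerivWithinAt) fun x hx => ?_
  rw [interior_Ici] at hx
  have : 0 < x := hx
  nlinarith [gaussianPDFReal_nonneg 0 1 x]

end GaussQ

section LowerGamma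

lemma hasDerivAt_rpow_mul_exp_neg (a : ℝ) {t : ℝ} (ht : 0 < t) :
    HasDerivAt (fun t => t ^ a * exp (-t)) (t ^ (a - 1) * exp (-t) * (a - t)) t := by
  have h := (hasDerivAt_rpow_const (p := a) (Or.inl ht.ne')).mul (hasDerivAt_neg t).exp
  refine h.congr_deriv ?_
  rw [show t ^ a = t ^ (a - 1) * t by rw [← rpow_add_one ht.ne']; ring_nf]
  ring

lemma lowerGamma_eq_intervalIntegral (s : ℝ) {x : ℝ} (hx : 0 ≤ x) :
    lowerGamma s x = ∫ t in (0 : ℝ)..x, t ^ (s - 1) * exp (-t) := by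
  rw [intervalIntegral.integral_of_le hx, integral_Ioc_eq_integral_Ioo]
  rfl

lemma convexOn_lowerGamma {s : ℝ} (hs : 1 ≤ s) : ConvexOn ℝ (Icc 0 (s - 1)) (lowerGamma s) := by
  have hcont : Continuous fun t : ℝ => t ^ (s - 1) * exp (-t) := by
    have := Real.continuous_rpow_const (q := s - 1) (by linarith)
    fun_prop
  have hprim (x : ℝ) : HasDerivAt (fun y => ∫ t in (0 : ℝ)..y, t ^ (s - 1) * exp (-t))
      (x ^ (s - 1) * exp (-x)) x :=
    intervalIntegral.integral_hasDerivAt_right (hcont.intervalIntegrable _ _)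
      (hcont.stronglyMeasurableAtFilter _ _) hcont.continuousAt
  refine (convexOn_of_hasDerivWithinAt2_nonneg (convex_Icc _ _)
    (f'' := fun t => t ^ (s - 1 - 1) * exp (-t) * (s - 1 - t))
    (fun x _ => (hprim x).continuousAt.continuousWithinAt)
    (fun x _ => (hprim x).hasDerivWithinAt) (fun x hx => ?_) fun x hx => ?_).congr
    fun x hx => (lowerGamma_eq_intervalIntegral s hx.1).symm
  · rw [interior_Icc] at hx
    exact (hasDerivAt_rpow_mul_exp_neg _ hx.1).hasDerivWithinAt
  · rw [interior_Icc] at hx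
    have : 0 ≤ s - 1 - x := by linarith [hx.2]
    have := rpow_nonneg hx.1.le (s - 1 - 1)
    positivity

lemma integrableOn_rpow_mul_exp_neg {s : ℝ} (hs : 0 < s) :
    IntegrableOn (fun t : ℝ => t ^ (s - 1) * exp (-t)) (Ioi 0) :=
  (GammaIntegral_convergent hs).congr_fun (fun _ _ => mul_comm _ _) measurableSet_Ioi

lemma lowerGamma_le_setIntegral {s : ℝ} (hs : 0 < s) {x : ℝ} {A : Set ℝ} (hA : MeasurableSet A)
    (hxA : Ioo 0 x ⊆ A) (hA0 : A ⊆ Ioi 0) :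
    lowerGamma s x ≤ ∫ t in A, t ^ (s - 1) * exp (-t) :=
  setIntegral_mono_set ((integrableOn_rpow_mul_exp_neg hs).mono_set hA0)
    ((ae_restrict_mem hA).mono fun t ht => by have : 0 < t := hA0 ht; dsimp; positivity)
    hxA.eventuallyLE

lemma monotone_lowerGamma {s : ℝ} (hs : 0 < s) : Monotone (lowerGamma s) :=
  fun _ _ hxy => lowerGamma_le_setIntegral hs measurableSet_Ioo (Ioo_subset_Ioo_right hxy)
    Ioo_subset_Ioi_self

lemma lowerGamma_le_Gamma {s : ℝ} (hs : 0 < s) (x : ℝ) : lowerGamma s x ≤ Gamma s := by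
  rw [Gamma_eq_integral hs]
  simp only [mul_comm (exp _)]
  exact lowerGamma_le_setIntegral hs measurableSet_Ioi Ioo_subset_Ioi_self subset_rfl

variable {s p : ℝ}

lemma concaveOn_one_sub_lowerGamma_div (hs : 1 ≤ s) (hp : 0 < p) :
    ConcaveOn ℝ (Icc 0 (p * (s - 1))) fun x => 1 - lowerGamma s (x / p) / Gamma s := by
  have hpre : LinearMap.mulRight ℝ p⁻¹ ⁻¹' Icc 0 (s - 1) = Icc 0 (p * (s - 1)) := by
    ext x
    simp [← div_eq_mul_inv, le_div_iff₀ hp, div_le_iff₀ hp, mul_comm]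
  have h := ((convexOn_lowerGamma hs).comp_linearMap (LinearMap.mulRight ℝ p⁻¹)).smul
    (inv_nonneg.2 (Gamma_pos_of_pos (by linarith : 0 < s)).le)
  rw [hpre] at h
  exact (h.neg.add_const 1).congr fun x _ => by simp [div_eq_mul_inv]; ring

lemma antitone_one_sub_lowerGamma_div (hs : 0 < s) (hp : 0 < p) :
    Antitone fun x => 1 - lowerGamma s (x / p) / Gamma s := fun _ _ hxy => by
  have := monotone_lowerGamma hs (div_le_div_of_nonneg_right hxy hp.le)
  have := Gamma_pos_of_pos hs
  dsimp only
  gcongr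

lemma one_sub_lowerGamma_div_nonneg (hs : 0 < s) (x : ℝ) :
    0 ≤ 1 - lowerGamma s x / Gamma s :=
  sub_nonneg.2 (div_le_one_of_le₀ (lowerGamma_le_Gamma hs x) (Gamma_pos_of_pos hs).le)

end LowerGamma

section GapRatio

lemma antitoneOn_log_div_sq_sub_one : AntitoneOn (fun u => log u / (u ^ 2 - 1)) (Ioi 1) := by
  have hderiv (u : ℝ) (hu : 1 < u) : HasDerivAt (fun u => log u / (u ^ 2 - 1))
      ((u⁻¹ * (u ^ 2 - 1) - log u * (2 * u)) / (u ^ 2 - 1) ^ 2) u :=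
    ((hasDerivAt_log (by positivity)).fun_div ((hasDerivAt_pow 2 u).sub_const 1)
      (by nlinarith)).congr_deriv (by push_cast; ring)
  refine antitoneOn_of_hasDerivWithinAt_nonpos (convex_Ioi 1)
    (fun u hu => (hderiv u hu).continuousAt.continuousWithinAt)
    (fun u hu => (hderiv u (interior_subset hu)).hasDerivWithinAt) fun u hu => ?_
  rw [interior_Ioi] at hu
  have hu : (1 : ℝ) < u := hu
  have hlog : 1 - (u ^ 2)⁻¹ ≤ 2 * log u := by
    simpa [log_pow] using one_sub_inv_le_log_of_pos (by positivity : 0 < u ^ 2)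
  have : u⁻¹ * (u ^ 2 - 1) = u * (1 - (u ^ 2)⁻¹) := by field_simp
  apply div_nonpos_of_nonpos_of_nonneg _ (sq_nonneg _)
  nlinarith

lemma three_log_le_sq_sub_one {u₀ u : ℝ} (hu₀ : 1 < u₀) (hu : u₀ ≤ u)
    (h : log u₀ / (u₀ ^ 2 - 1) = 1 / 3) : 3 * log u ≤ u ^ 2 - 1 := by
  have := antitoneOn_log_div_sq_sub_one hu₀ (hu₀.trans_le hu : 1 < u) hu
  dsimp only at this
  rw [h, div_le_iff₀ (by nlinarith)] at this
  linarith

/-- The paper's `A(Q)` is `√T * gapRatio (R * log 2) (1 + Q)`. -/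
noncomputable def gapRatio (c u : ℝ) : ℝ := (log u - c) / √(1 - 1 / u ^ 2)

noncomputable def gapRatioDeriv (c u : ℝ) : ℝ :=
  (u ^ 2 - 1 - log u + c) / ((u ^ 2 - 1) * √(u ^ 2 - 1))

variable {c u u₀ : ℝ}

lemma gapRatio_eq (hu : 0 < u) : gapRatio c u = (log u - c) * u / √(u ^ 2 - 1) := by
  rw [gapRatio, show 1 - 1 / u ^ 2 = (u ^ 2 - 1) / u ^ 2 by field_simp, sqrt_div' _ (sq_nonneg u),
    sqrt_sq hu.le, div_div_eq_mul_div]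

lemma gapRatio_nonneg (hu : c ≤ log u) : 0 ≤ gapRatio c u :=
  div_nonneg (sub_nonneg.2 hu) (sqrt_nonneg _)

lemma hasDerivAt_sqrt_sq_sub_one (hu : 1 < u) :
    HasDerivAt (fun u => √(u ^ 2 - 1)) (u / √(u ^ 2 - 1)) u :=
  ((hasDerivAt_pow 2 u).sub_const 1).sqrt (by nlinarith) |>.congr_deriv (by push_cast; field_simp)

lemma hasDerivAt_sq_sub_one_mul_sqrt (hu : 1 < u) :
    HasDerivAt (fun u => (u ^ 2 - 1) * √(u ^ 2 - 1)) (3 * u * √(u ^ 2 - 1)) u := by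
  have hv : 0 < u ^ 2 - 1 := by nlinarith
  refine (((hasDerivAt_pow 2 u).sub_const 1).fun_mul
    (hasDerivAt_sqrt_sq_sub_one hu)).congr_deriv ?_
  field_simp
  push_cast
  linear_combination (-u) * sq_sqrt hv.le

lemma hasDerivAt_gapRatio (hu : 1 < u) : HasDerivAt (gapRatio c) (gapRatioDeriv c u) u := by
  have hv : 0 < u ^ 2 - 1 := by nlinarith
  have hw : 0 < √(u ^ 2 - 1) := sqrt_pos.2 hv
  have h := (((hasDerivAt_log (by positivity)).sub_const c).fun_mul (hasDerivAt_id' u)).fun_div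
    (hasDerivAt_sqrt_sq_sub_one hu) hw.ne'
  refine (h.congr_deriv ?_).congr_of_eventuallyEq ?_
  · unfold gapRatioDeriv
    field_simp
    linear_combination u ^ 2 * (log u - c) * sq_sqrt hv.le
  · filter_upwards [lt_mem_nhds (zero_lt_one.trans hu)] with v hv
    exact gapRatio_eq hv

lemma hasDerivAt_gapRatioDeriv (hu : 1 < u) : HasDerivAt (gapRatioDeriv c)
    ((3 * u * (log u - c) - u * (u ^ 2 - 1) - (u ^ 2 - 1) / u) /
      ((u ^ 2 - 1) ^ 2 * √(u ^ 2 - 1))) u := by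
  have hv : 0 < u ^ 2 - 1 := by nlinarith
  have hw : 0 < √(u ^ 2 - 1) := sqrt_pos.2 hv
  refine (((((hasDerivAt_pow 2 u).sub_const 1).fun_sub (hasDerivAt_log (by positivity))).add_const
    c).fun_div (hasDerivAt_sq_sub_one_mul_sqrt hu) (mul_pos hv hw).ne').congr_deriv ?_
  field_simp
  push_cast
  ring

lemma concaveOn_gapRatio (hc : 0 ≤ c) (hu₀ : 1 < u₀) (h : log u₀ / (u₀ ^ 2 - 1) = 1 / 3) :
    ConcaveOn ℝ (Ici u₀) (gapRatio c) := by
  refine concaveOn_of_hasDerivWithinAt2_nonpos (convex_Ici u₀)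
    (fun u hu => (hasDerivAt_gapRatio (hu₀.trans_le hu)).continuousAt.continuousWithinAt)
    (fun u hu => (hasDerivAt_gapRatio (hu₀.trans_le (interior_subset hu))).hasDerivWithinAt)
    (fun u hu => (hasDerivAt_gapRatioDeriv (hu₀.trans_le (interior_subset hu))).hasDerivWithinAt)
    fun u hu => ?_
  have hu1 : 1 < u := hu₀.trans_le (interior_subset hu)
  have hlog := three_log_le_sq_sub_one hu₀ (interior_subset hu) h
  have hv : 0 < u ^ 2 - 1 := by nlinarith
  apply div_nonpos_of_nonpos_of_nonneg _ (by positivity)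
  have : 0 ≤ (u ^ 2 - 1) / u := by positivity
  nlinarith

lemma monotoneOn_gapRatio (hc : 0 ≤ c) (hu₀ : 1 < u₀) (h : log u₀ / (u₀ ^ 2 - 1) = 1 / 3) :
    MonotoneOn (gapRatio c) (Ici u₀) := by
  refine monotoneOn_of_hasDerivWithinAt_nonneg (convex_Ici u₀)
    (fun u hu => (hasDerivAt_gapRatio (hu₀.trans_le hu)).continuousAt.continuousWithinAt)
    (fun u hu => (hasDerivAt_gapRatio (hu₀.trans_le (interior_subset hu))).hasDerivWithinAt)
    fun u hu => ?_
  have hu1 : 1 < u := hu₀.trans_le (interior_subset hu)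
  have hlog := three_log_le_sq_sub_one hu₀ (interior_subset hu) h
  have hl : 0 ≤ log u := log_nonneg hu1.le
  have hv : 0 < u ^ 2 - 1 := by nlinarith
  exact div_nonneg (by linarith) (by positivity)

end GapRatio

theorem Pe_convex_general (N : ℕ) (hN : 1 ≤ N) (Pmax T R Q₀ : ℝ)
    (hP : 0 < Pmax) (hR : 0 < R)
    (hQ₀ : 0 < Q₀) (hQ₀eq : Real.log (1 + Q₀) / ((1 + Q₀) ^ 2 - 1) = 1 / 3) :
    ConvexOn ℝ (Set.Ioo (max Q₀ (2 ^ R - 1)) (Pmax * ((N : ℝ) - 1)))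
      (fun Q : ℝ =>
        1 - (1 - lowerGamma N (Q / Pmax) / Real.Gamma N) *
          (1 - gaussQ (Real.sqrt T * (Real.log (1 + Q) - R * Real.log 2) /
            Real.sqrt (1 - 1 / (1 + Q) ^ 2)))) := by
  set S := Ioo (max Q₀ (2 ^ R - 1)) (Pmax * ((N : ℝ) - 1))
  set c := R * log 2
  have hN' : (1 : ℝ) ≤ N := by exact_mod_cast hN
  have hc : 0 ≤ c := by positivity
  have hu₀ : 1 < 1 + Q₀ := by linarith
  have hSQ₀ : S ⊆ (fun Q => 1 + Q) ⁻¹' Ici (1 + Q₀) := fun Q hQ => by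
    simpa using (le_max_left _ _).trans hQ.1.le
  have hSc : ∀ Q ∈ S, c ≤ log (1 + Q) := fun Q hQ => by
    have h2R : (2 : ℝ) ^ R ≤ 1 + Q := by linarith [(le_max_right Q₀ _).trans_lt hQ.1]
    simpa [c, log_rpow two_pos] using log_le_log (by positivity) h2R
  have hA : ConcaveOn ℝ S fun Q => √T • gapRatio c (1 + Q) :=
    (((concaveOn_gapRatio hc hu₀ hQ₀eq).translate_right 1).subset hSQ₀ (convex_Ioo _ _)).smul
      (sqrt_nonneg T)
  have hAmono : MonotoneOn (fun Q => √T • gapRatio c (1 + Q)) S := fun x hx y hy hxy =>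
    smul_le_smul_of_nonneg_left (monotoneOn_gapRatio hc hu₀ hQ₀eq (hSQ₀ hx) (hSQ₀ hy)
      (by linarith)) (sqrt_nonneg T)
  have hF := (concaveOn_one_sub_lowerGamma_div hN' hP).subset
    (fun Q (hQ : Q ∈ S) => ⟨hQ₀.le.trans ((le_max_left _ _).trans hQ.1.le), hQ.2.le⟩)
    (convex_Ioo _ _)
  have hG := concaveOn_one_sub_gaussQ.comp_of_mapsTo (monotone_one_sub_gaussQ.monotoneOn _) hA
    fun Q hQ => smul_nonneg (sqrt_nonneg T) (gapRatio_nonneg (hSc Q hQ))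
  have hFG := hF.mul hG (fun Q _ => one_sub_lowerGamma_div_nonneg (by linarith) _)
    (fun Q _ => one_sub_gaussQ_nonneg _)
    (((antitone_one_sub_lowerGamma_div (by linarith) hP).antitoneOn S).antivaryOn
      (monotone_one_sub_gaussQ.comp_monotoneOn hAmono))
  refine (hFG.neg.add_const 1).congr fun Q _ => ?_
  simp only [Pi.add_apply, Pi.neg_apply, Pi.mul_apply, Function.comp_apply, gapRatio, smul_eq_mul,
    mul_div_assoc]
  ring

theorem Pe_convex (N : ℕ) (hN : 1 ≤ N) (Pmax T R Q₀ : ℝ)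
    (hP : 0 < Pmax) (hT : 0 < T) (hR : 0 < R)
    (hQ₀ : 0 < Q₀) (hQ₀eq : Real.log (1 + Q₀) / ((1 + Q₀) ^ 2 - 1) = 1 / 3)
    (hQ₀uniq : ∀ Q : ℝ, 0 < Q → Real.log (1 + Q) / ((1 + Q) ^ 2 - 1) = 1 / 3 → Q = Q₀) :
    ConvexOn ℝ (Set.Ioo (max Q₀ (2 ^ R - 1)) (Pmax * ((N : ℝ) - 1)))
      (fun Q : ℝ =>
        1 - (1 - lowerGamma N (Q / Pmax) / Real.Gamma N) *
          (1 - gaussQ (Real.sqrt T * (Real.log (1 + Q) - R * Real.log 2) /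
            Real.sqrt (1 - 1 / (1 + Q) ^ 2)))) :=
  Pe_convex_general N hN Pmax T R Q₀ hP hR hQ₀ hQ₀eq
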